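/- arXiv:2005.07449 — 12 statements merged into one kernel-verified Lean document; each statement's English description precedes it below -/
import Mathlib

section
/- Let V be a module over ℝ and let ρ, ρ' : V →ₗ[ℝ] V be linear involutions, i.e. ρ ∘ ρ = id and ρ' ∘ ρ' = id. Then the affine combination t•ρ + (1−t)•ρ' is an involution for every t ∈ ℝ if and only if the Clifford–Dirac relation ρ∘ρ' + ρ'∘ρ = 2•id holds. -/
/-- The equivalence underlying Theorem 2.17 of the paper: for two linear involutions
`ρ, ρ'` of an `ℝ`-module `V`, the affine combination `t•ρ + (1−t)•ρ'` is an involution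
for every `t ∈ ℝ` if and only if the Clifford–Dirac relation `ρ∘ρ' + ρ'∘ρ = 2•id` holds. -/
theorem affine_combination_involution_iff_cliffordDirac
    (V : Type*) [AddCommGroup V] [Module ℝ V]
    (ρ ρ' : V →ₗ[ℝ] V)
    (hρ : ρ ∘ₗ ρ = LinearMap.id) (hρ' : ρ' ∘ₗ ρ' = LinearMap.id) :
    (∀ t : ℝ, (t • ρ + (1 - t) • ρ') ∘ₗ (t • ρ + (1 - t) • ρ') = LinearMap.id) ↔
      ρ ∘ₗ ρ' + ρ' ∘ₗ ρ = (2 : ℝ) • LinearMap.id := by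
  have expand : ∀ t : ℝ, (t • ρ + (1 - t) • ρ') ∘ₗ (t • ρ + (1 - t) • ρ')
      = (t^2 + (1-t)^2) • LinearMap.id + (t*(1-t)) • (ρ ∘ₗ ρ' + ρ' ∘ₗ ρ) := by
    intro t
    simp only [LinearMap.add_comp, LinearMap.comp_add, LinearMap.smul_comp,
      LinearMap.comp_smul, hρ, hρ', smul_add, smul_smul]
    match_scalars <;> ring
  constructor
  · intro h
    have h2 := h (1/2)
    rw [expand] at h2
    norm_num at h2
    have h4 := congrArg (fun X : V →ₗ[ℝ] V => (4:ℝ) • X) h2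
    simp only [smul_add, smul_smul] at h4
    norm_num at h4
    linear_combination (norm := module) h4
  · intro h t
    rw [expand, h]
    match_scalars <;> ring
end

section
/- Let (∇, ρ) be a quasi-connection on L with torsion T, and suppose ρ ∘ ρ = id. Then the torsion is A-bilinear: for all f ∈ A and X, Y ∈ L, T(f•X, Y) = f • T(X,Y) and T(X, f•Y) = f • T(X,Y). -/
open scoped BigOperators

/-- A (parity-sign-free) quasi-connection on the module `L = Derivation ℝ A A` of
vector fields: an `A`-linear anchor `ρ` together with an `ℝ`-bilinear map `∇`
satisfying `∇_{f•X} Y = f • ∇_X Y` and `∇_X (f•Y) = (ρ(X) f) • Y + f • ∇_X Y`. -/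
def IsQuasiConnection {A : Type*} [CommRing A] [Algebra ℝ A]
    (nabla : Derivation ℝ A A → Derivation ℝ A A → Derivation ℝ A A)
    (rho : Derivation ℝ A A →ₗ[A] Derivation ℝ A A) : Prop :=
  (∀ X X' Y, nabla (X + X') Y = nabla X Y + nabla X' Y) ∧
  (∀ (c : ℝ) (X Y), nabla (c • X) Y = c • nabla X Y) ∧
  (∀ X Y Y', nabla X (Y + Y') = nabla X Y + nabla X Y') ∧
  (∀ (c : ℝ) (X Y), nabla X (c • Y) = c • nabla X Y) ∧
  (∀ (f : A) (X Y), nabla (f • X) Y = f • nabla X Y) ∧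
  (∀ (f : A) (X Y), nabla X (f • Y) = rho X f • Y + f • nabla X Y)

/-- The torsion `T(X,Y) := ∇_X Y − ∇_Y X − ρ(⁅ρ(X), ρ(Y)⁆)` of a quasi-connection. -/
def qcTorsion {A : Type*} [CommRing A] [Algebra ℝ A]
    (nabla : Derivation ℝ A A → Derivation ℝ A A → Derivation ℝ A A)
    (rho : Derivation ℝ A A →ₗ[A] Derivation ℝ A A)
    (X Y : Derivation ℝ A A) : Derivation ℝ A A :=
  nabla X Y - nabla Y X - rho ⁅rho X, rho Y⁆

/-- The curvature `R(X,Y)Z := ∇_X(∇_Y Z) − ∇_Y(∇_X Z) − ∇_{ρ(⁅ρ(X), ρ(Y)⁆)} Z`. -/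
def qcCurvature {A : Type*} [CommRing A] [Algebra ℝ A]
    (nabla : Derivation ℝ A A → Derivation ℝ A A → Derivation ℝ A A)
    (rho : Derivation ℝ A A →ₗ[A] Derivation ℝ A A)
    (X Y Z : Derivation ℝ A A) : Derivation ℝ A A :=
  nabla X (nabla Y Z) - nabla Y (nabla X Z) - nabla (rho ⁅rho X, rho Y⁆) Z

/-- An affine connection on `L = Derivation ℝ A A`. -/
def IsAffineConnection {A : Type*} [CommRing A] [Algebra ℝ A]
    (nabla : Derivation ℝ A A → Derivation ℝ A A → Derivation ℝ A A) : Prop :=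
  (∀ X X' Y, nabla (X + X') Y = nabla X Y + nabla X' Y) ∧
  (∀ (c : ℝ) (X Y), nabla (c • X) Y = c • nabla X Y) ∧
  (∀ X Y Y', nabla X (Y + Y') = nabla X Y + nabla X Y') ∧
  (∀ (c : ℝ) (X Y), nabla X (c • Y) = c • nabla X Y) ∧
  (∀ (f : A) (X Y), nabla (f • X) Y = f • nabla X Y) ∧
  (∀ (f : A) (X Y), nabla X (f • Y) = X f • Y + f • nabla X Y)


lemma smul_bracket_aux {A : Type*} [CommRing A] [Algebra ℝ A]
    (f : A) (X Y : Derivation ℝ A A) :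
    ⁅f • X, Y⁆ = f • ⁅X, Y⁆ - Y f • X := by
  ext a
  simp only [Derivation.commutator_apply, Derivation.sub_apply, Derivation.smul_apply,
    Derivation.leibniz, smul_eq_mul]
  ring

/-- The 'if' direction of Theorem 2.14 (torsion): for a quasi-connection with an
involutive anchor the torsion is `A`-bilinear, i.e. a tensor. -/
theorem torsion_tensorial_of_involutive {A : Type*} [CommRing A] [Algebra ℝ A]
    (nabla : Derivation ℝ A A → Derivation ℝ A A → Derivation ℝ A A)
    (rho : Derivation ℝ A A →ₗ[A] Derivation ℝ A A)
    (h : IsQuasiConnection nabla rho)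
    (hinv : rho ∘ₗ rho = LinearMap.id) :
    ∀ (f : A) (X Y : Derivation ℝ A A),
      qcTorsion nabla rho (f • X) Y = f • qcTorsion nabla rho X Y ∧
      qcTorsion nabla rho X (f • Y) = f • qcTorsion nabla rho X Y := by
  intro f X Y
  obtain ⟨_, _, _, _, h5, h6⟩ := h
  have hXY : rho (rho X) = X := LinearMap.congr_fun hinv X
  have hYX : rho (rho Y) = Y := LinearMap.congr_fun hinv Y
  constructor
  · simp only [qcTorsion, map_smul, smul_bracket_aux, h5, h6, map_sub, map_smul, hXY,
      smul_sub]
    abel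
  · have : ⁅rho X, f • rho Y⁆ = f • ⁅rho X, rho Y⁆ + rho X f • rho Y := by
      rw [← lie_skew, smul_bracket_aux, ← lie_skew (rho X) (rho Y)]
      simp only [smul_neg, neg_sub, neg_neg, smul_sub]
      abel
    simp only [qcTorsion, map_smul, h5, h6, this, map_add, map_smul, hYX, smul_sub]
    abel
end

section
/- Let (∇, ρ) be a quasi-connection on L with curvature R. Then for all f ∈ A and X, Y, Z ∈ L: R(X, f•Y)Z = f • R(X,Y)Z + (ρ(X) f) • (∇_Y Z − ∇_{ρ(ρ(Y))} Z). -/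
open scoped BigOperators

lemma lie_smul_right' {A : Type*} [CommRing A] [Algebra ℝ A]
    (f : A) (D E : Derivation ℝ A A) : ⁅D, f • E⁆ = D f • E + f • ⁅D, E⁆ := by
  ext a
  simp [Derivation.commutator_apply, Derivation.leibniz, smul_eq_mul]
  ring

/-- The curvature-anomaly computation in the proof of Theorem 2.14:
`R(X, f•Y)Z = f • R(X,Y)Z + (ρ(X) f) • (∇_Y Z − ∇_{ρ(ρ(Y))} Z)`. -/
theorem curvature_anomaly_second_arg {A : Type*} [CommRing A] [Algebra ℝ A]
    (nabla : Derivation ℝ A A → Derivation ℝ A A → Derivation ℝ A A)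
    (rho : Derivation ℝ A A →ₗ[A] Derivation ℝ A A)
    (h : IsQuasiConnection nabla rho)
    (f : A) (X Y Z : Derivation ℝ A A) :
    qcCurvature nabla rho X (f • Y) Z =
      f • qcCurvature nabla rho X Y Z + rho X f • (nabla Y Z - nabla (rho (rho Y)) Z) := by
  obtain ⟨ha1, -, ha2, -, hs1, hs2⟩ := h
  simp only [qcCurvature, hs1, hs2, lie_smul_right', map_add, map_smul, ha1]
  simp only [smul_sub, smul_add]
  abel
end

section
/- Let (∇, ρ) be a quasi-connection on L with curvature R, and suppose ρ ∘ ρ = id. Then for all f ∈ A and X, Y, Z ∈ L: R(X,Y)(f•Z) = f • R(X,Y)Z. -/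
open scoped BigOperators

/-- For an involutive anchor, `R(X,Y) : L → L` is `A`-linear (stated after
Definition 2.9 and guaranteed by Theorem 2.14): `R(X,Y)(f•Z) = f • R(X,Y)Z`. -/
theorem curvature_tensorial_third_arg {A : Type*} [CommRing A] [Algebra ℝ A]
    (nabla : Derivation ℝ A A → Derivation ℝ A A → Derivation ℝ A A)
    (rho : Derivation ℝ A A →ₗ[A] Derivation ℝ A A)
    (h : IsQuasiConnection nabla rho)
    (hinv : rho ∘ₗ rho = LinearMap.id)
    (f : A) (X Y Z : Derivation ℝ A A) :
    qcCurvature nabla rho X Y (f • Z) = f • qcCurvature nabla rho X Y Z := by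
  obtain ⟨ha, hc, hay, hcy, hf, hl⟩ := h
  have hrr : ∀ W : Derivation ℝ A A, rho (rho W) = W := by
    intro W
    have := LinearMap.congr_fun hinv W
    simpa using this
  have hcomm : (⁅rho X, rho Y⁆ : Derivation ℝ A A) f
      = rho X (rho Y f) - rho Y (rho X f) := by
    simp [Derivation.commutator_apply]
  simp only [qcCurvature, hl, hay, hrr, hcomm, sub_smul]
  ext a
  simp only [Derivation.add_apply, Derivation.sub_apply, Derivation.smul_apply, smul_eq_mul]
  ring
end

section
/- Let (∇, ρ) be a quasi-connection on L with curvature R, and suppose ρ ∘ ρ = id. Then R is A-linear in its first argument: for all f ∈ A and X, Y, Z ∈ L, R(f•X, Y)Z = f • R(X,Y)Z. -/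
open scoped BigOperators

private lemma smul_lie_deriv {A : Type*} [CommRing A] [Algebra ℝ A]
    (f : A) (P Q : Derivation ℝ A A) :
    ⁅f • P, Q⁆ = f • ⁅P, Q⁆ - Q f • P := by
  ext a
  simp only [Derivation.commutator_apply, Derivation.smul_apply, map_smul,
    Derivation.sub_apply, smul_eq_mul, Derivation.leibniz]
  ring

private lemma nabla_sub {A : Type*} [CommRing A] [Algebra ℝ A]
    {nabla : Derivation ℝ A A → Derivation ℝ A A → Derivation ℝ A A}
    {rho : Derivation ℝ A A →ₗ[A] Derivation ℝ A A}
    (h : IsQuasiConnection nabla rho) (X X' Y : Derivation ℝ A A) :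
    nabla (X - X') Y = nabla X Y - nabla X' Y := by
  have := h.1 (X - X') X' Y
  rw [sub_add_cancel] at this
  rw [this]; abel

/-- The 'if' direction of Theorem 2.14 (curvature, first argument): for an
involutive anchor, `R(f•X, Y)Z = f • R(X,Y)Z`. -/
theorem curvature_tensorial_first_arg {A : Type*} [CommRing A] [Algebra ℝ A]
    (nabla : Derivation ℝ A A → Derivation ℝ A A → Derivation ℝ A A)
    (rho : Derivation ℝ A A →ₗ[A] Derivation ℝ A A)
    (h : IsQuasiConnection nabla rho)
    (hinv : rho ∘ₗ rho = LinearMap.id)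
    (f : A) (X Y Z : Derivation ℝ A A) :
    qcCurvature nabla rho (f • X) Y Z = f • qcCurvature nabla rho X Y Z := by
  have h' := h
  obtain ⟨hadd1, _, _, _, hA1, hA2⟩ := h
  have hXX : rho (rho X) = X := congrFun (congrArg DFunLike.coe hinv) X
  have hbr : rho ⁅rho (f • X), rho Y⁆ = f • rho ⁅rho X, rho Y⁆ - rho Y f • X := by
    rw [map_smul, smul_lie_deriv, map_sub, map_smul, map_smul, hXX]
  simp only [qcCurvature, hA1, hA2, hbr, nabla_sub h']
  module
end

section
/- Let (∇, ρ) be a quasi-connection on L with ρ ∘ ρ = id. Define ∇̄_X Y := ∇_{ρ(X)} Y. Then ∇̄ is an affine connection on L, and moreover ∇_X Y = ∇̄_{ρ(X)} Y for all X, Y ∈ L; that is, (∇, ρ) is canonically generated by the affine connection ∇̄ = ∇ ∘ (ρ, id). -/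
open scoped BigOperators

/-- Proposition 2.22 (sign-free form): every quasi-connection with involutive anchor
is canonically generated by the affine connection `∇̄ = ∇ ∘ (ρ, id)`, i.e.
`∇̄_X Y := ∇_{ρ(X)} Y` is an affine connection and `∇_X Y = ∇̄_{ρ(X)} Y`. -/
theorem oddConnection_canonically_generated {A : Type*} [CommRing A] [Algebra ℝ A]
    (nabla : Derivation ℝ A A → Derivation ℝ A A → Derivation ℝ A A)
    (rho : Derivation ℝ A A →ₗ[A] Derivation ℝ A A)
    (h : IsQuasiConnection nabla rho)
    (hinv : rho ∘ₗ rho = LinearMap.id) :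
    IsAffineConnection (fun X Y => nabla (rho X) Y) ∧
      ∀ X Y : Derivation ℝ A A, nabla X Y = nabla (rho (rho X)) Y := by
  obtain ⟨h1, h2, h3, h4, h5, h6⟩ := h
  have hii : ∀ X : Derivation ℝ A A, rho (rho X) = X := fun X =>
    congrFun (congrArg DFunLike.coe hinv) X
  refine ⟨⟨?_, ?_, ?_, ?_, ?_, ?_⟩, ?_⟩
  · intro X X' Y; dsimp only; rw [map_add, h1]
  · intro c X Y; dsimp only
    rw [← algebraMap_smul A c X, map_smul, algebraMap_smul, h2]
  · exact fun X Y Y' => h3 _ Y Y'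
  · exact fun c X Y => h4 c _ Y
  · intro f X Y; dsimp only; rw [map_smul, h5]
  · intro f X Y; dsimp only; rw [h6, hii]
  · intro X Y; rw [hii]
end

section
/- Let (∇, ρ) be a quasi-connection on L with ρ ∘ ρ = id, with torsion T and curvature R. Then for all X, Y, Z ∈ L the following algebraic Bianchi identity holds: R(X,Y)Z + R(Y,Z)X + R(Z,X)Y = ∇_X(T(Y,Z)) + ∇_Y(T(Z,X)) + ∇_Z(T(X,Y)) + T(X, ρ(⁅ρ(Y), ρ(Z)⁆)) + T(Y, ρ(⁅ρ(Z), ρ(X)⁆)) + T(Z, ρ(⁅ρ(X), ρ(Y)⁆)). -/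
open scoped BigOperators

/-- Theorem 2.24 (sign-free form): the generalised first (algebraic) Bianchi
identity for a quasi-connection with involutive anchor. -/
theorem algebraic_bianchi_identity {A : Type*} [CommRing A] [Algebra ℝ A]
    (nabla : Derivation ℝ A A → Derivation ℝ A A → Derivation ℝ A A)
    (rho : Derivation ℝ A A →ₗ[A] Derivation ℝ A A)
    (h : IsQuasiConnection nabla rho)
    (hinv : rho ∘ₗ rho = LinearMap.id)
    (X Y Z : Derivation ℝ A A) :
    qcCurvature nabla rho X Y Z + qcCurvature nabla rho Y Z X + qcCurvature nabla rho Z X Y =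
      nabla X (qcTorsion nabla rho Y Z) + nabla Y (qcTorsion nabla rho Z X) +
        nabla Z (qcTorsion nabla rho X Y) +
      qcTorsion nabla rho X (rho ⁅rho Y, rho Z⁆) +
        qcTorsion nabla rho Y (rho ⁅rho Z, rho X⁆) +
        qcTorsion nabla rho Z (rho ⁅rho X, rho Y⁆) := by
  obtain ⟨ha1, hc1, ha2, hc2, _, _⟩ := h
  have hrr : ∀ W, rho (rho W) = W := fun W => by
    have := LinearMap.ext_iff.mp hinv W
    simpa using this
  have hn1 : ∀ X Y, nabla (-X) Y = - nabla X Y := fun X Y => by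
    rw [show -X = (-1:ℝ) • X by simp, hc1]; simp
  have hn2 : ∀ X Y, nabla X (-Y) = - nabla X Y := fun X Y => by
    rw [show -Y = (-1:ℝ) • Y by simp, hc2]; simp
  have hs1 : ∀ X X' Y, nabla (X - X') Y = nabla X Y - nabla X' Y := fun X X' Y => by
    rw [sub_eq_add_neg, ha1, hn1, sub_eq_add_neg]
  have hs2 : ∀ X Y Y', nabla X (Y - Y') = nabla X Y - nabla X Y' := fun X Y Y' => by
    rw [sub_eq_add_neg, ha2, hn2, sub_eq_add_neg]
  have hJ : rho ⁅rho Z, ⁅rho X, rho Y⁆⁆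
      = - rho ⁅rho X, ⁅rho Y, rho Z⁆⁆ - rho ⁅rho Y, ⁅rho Z, rho X⁆⁆ := by
    rw [← map_neg, ← map_sub]
    congr 1
    have hj := lie_jacobi (rho X) (rho Y) (rho Z)
    have h2 := eq_neg_of_add_eq_zero_right hj
    rw [h2]; abel
  simp only [qcCurvature, qcTorsion, hs2, hs1, hrr, hJ]
  abel
end

section
/- Let (∇, ρ) be a quasi-connection on L with ρ ∘ ρ = id and curvature R, and suppose (∇, ρ) is torsion-free, i.e. ∇_X Y − ∇_Y X − ρ(⁅ρ(X), ρ(Y)⁆) = 0 for all X, Y ∈ L. Then for all X, Y, Z ∈ L: R(X,Y)Z + R(Y,Z)X + R(Z,X)Y = 0. -/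
open scoped BigOperators

/-- Corollary 2.25 (sign-free form): the algebraic Bianchi identity for a
torsion-free quasi-connection with involutive anchor. -/
theorem algebraic_bianchi_torsion_free {A : Type*} [CommRing A] [Algebra ℝ A]
    (nabla : Derivation ℝ A A → Derivation ℝ A A → Derivation ℝ A A)
    (rho : Derivation ℝ A A →ₗ[A] Derivation ℝ A A)
    (h : IsQuasiConnection nabla rho)
    (hinv : rho ∘ₗ rho = LinearMap.id)
    (htf : ∀ X Y : Derivation ℝ A A, nabla X Y - nabla Y X - rho ⁅rho X, rho Y⁆ = 0)
    (X Y Z : Derivation ℝ A A) :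
    qcCurvature nabla rho X Y Z + qcCurvature nabla rho Y Z X +
      qcCurvature nabla rho Z X Y = 0 := by
  obtain ⟨hadd1, hsmul1, hadd2, hsmul2, hA, hB⟩ := h
  have hid : ∀ W : Derivation ℝ A A, rho (rho W) = W := fun W => by
    have := LinearMap.ext_iff.mp hinv W
    simpa using this
  have hneg : ∀ X Z : Derivation ℝ A A, nabla X (-Z) = -nabla X Z := by
    intro X Z
    rw [← neg_one_smul ℝ Z, hsmul2, neg_one_smul]
  have hsub : ∀ X Y Z : Derivation ℝ A A, nabla X (Y - Z) = nabla X Y - nabla X Z := by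
    intro X Y Z
    rw [sub_eq_add_neg, hadd2, hneg, ← sub_eq_add_neg]
  have key : ∀ U V : Derivation ℝ A A,
      nabla U V - nabla V U = rho ⁅rho U, rho V⁆ := by
    intro U V
    exact sub_eq_zero.mp (htf U V)
  have e1 : nabla X (nabla Y Z) - nabla X (nabla Z Y) = nabla X (rho ⁅rho Y, rho Z⁆) := by
    rw [← hsub, key]
  have e2 : nabla Y (nabla Z X) - nabla Y (nabla X Z) = nabla Y (rho ⁅rho Z, rho X⁆) := by
    rw [← hsub, key]
  have e3 : nabla Z (nabla X Y) - nabla Z (nabla Y X) = nabla Z (rho ⁅rho X, rho Y⁆) := by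
    rw [← hsub, key]
  have f1 : nabla X (rho ⁅rho Y, rho Z⁆) - nabla (rho ⁅rho Y, rho Z⁆) X
      = rho ⁅rho X, ⁅rho Y, rho Z⁆⁆ := by
    have := key X (rho ⁅rho Y, rho Z⁆); rwa [hid] at this
  have f2 : nabla Y (rho ⁅rho Z, rho X⁆) - nabla (rho ⁅rho Z, rho X⁆) Y
      = rho ⁅rho Y, ⁅rho Z, rho X⁆⁆ := by
    have := key Y (rho ⁅rho Z, rho X⁆); rwa [hid] at this
  have f3 : nabla Z (rho ⁅rho X, rho Y⁆) - nabla (rho ⁅rho X, rho Y⁆) Z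
      = rho ⁅rho Z, ⁅rho X, rho Y⁆⁆ := by
    have := key Z (rho ⁅rho X, rho Y⁆); rwa [hid] at this
  have jac : ⁅rho X, ⁅rho Y, rho Z⁆⁆ + ⁅rho Y, ⁅rho Z, rho X⁆⁆ + ⁅rho Z, ⁅rho X, rho Y⁆⁆
      = (0 : Derivation ℝ A A) := lie_jacobi _ _ _
  have main : qcCurvature nabla rho X Y Z + qcCurvature nabla rho Y Z X +
      qcCurvature nabla rho Z X Y
      = rho ⁅rho X, ⁅rho Y, rho Z⁆⁆ + rho ⁅rho Y, ⁅rho Z, rho X⁆⁆ +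
        rho ⁅rho Z, ⁅rho X, rho Y⁆⁆ := by
    rw [qcCurvature, qcCurvature, qcCurvature, ← f1, ← f2, ← f3, ← e1, ← e2, ← e3]
    abel
  rw [main, ← map_add, ← map_add, jac, map_zero]
end

section
/- Suppose L is a free A-module with a finite basis (Z_α)_{α∈ι}, and let ρ : L →ₗ[A] L be A-linear. Define the Weitzenböck operator ∇_X Y := ∑_α (ρ(X) Y^α) • Z_α, where Y = ∑_α Y^α • Z_α is the basis expansion of Y. Then (∇, ρ) is a quasi-connection on L: ∇ is ℝ-bilinear and for all f ∈ A, X, Y ∈ L, ∇_{f•X} Y = f • ∇_X Y and ∇_X (f•Y) = (ρ(X) f) • Y + f • ∇_X Y. -/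
open scoped BigOperators

/-!
A basis `(Z_α)` identifies `L` with `A^ι`, and the Weitzenböck operator is the derivation
`ρ(X)` applied coordinatewise in that frame. Each coordinate functional is `A`-linear and `ρ` is
`A`-linear, so `∇` is `A`-linear in `X`; in `Y` the Leibniz rule of `ρ(X)` gives the Leibniz rule
of `∇`, and `ℝ`-linearity follows from it because `ρ(X)` kills the constants `algebraMap ℝ A c`.
-/

namespace Module.Basis

variable {R A M ι : Type*} [CommSemiring R] [CommSemiring A] [Algebra R A]
  [AddCommMonoid M] [Module A M] [Fintype ι] (b : Basis ι A M)

noncomputable def frameDeriv (D : Derivation R A A) (Y : M) : M :=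
  ∑ α, D (b.repr Y α) • b α

theorem frameDeriv_add_left (D₁ D₂ : Derivation R A A) (Y : M) :
    b.frameDeriv (D₁ + D₂) Y = b.frameDeriv D₁ Y + b.frameDeriv D₂ Y := by
  simp only [frameDeriv, Derivation.coe_add, Pi.add_apply, add_smul, Finset.sum_add_distrib]

theorem frameDeriv_smul_left (f : A) (D : Derivation R A A) (Y : M) :
    b.frameDeriv (f • D) Y = f • b.frameDeriv D Y := by
  simp only [frameDeriv, Derivation.smul_apply, smul_assoc, Finset.smul_sum]

theorem frameDeriv_add_right (D : Derivation R A A) (Y Y' : M) :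
    b.frameDeriv D (Y + Y') = b.frameDeriv D Y + b.frameDeriv D Y' := by
  simp only [frameDeriv, map_add, Finsupp.add_apply, add_smul, Finset.sum_add_distrib]

theorem frameDeriv_smul_right (D : Derivation R A A) (f : A) (Y : M) :
    b.frameDeriv D (f • Y) = D f • Y + f • b.frameDeriv D Y := by
  have coord_leibniz : ∀ α, D (b.repr (f • Y) α) = D f * b.repr Y α + f * D (b.repr Y α) := by
    intro α
    rw [map_smul, Finsupp.smul_apply, smul_eq_mul, Derivation.leibniz, smul_eq_mul, smul_eq_mul,
      add_comm, mul_comm]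
  simp only [frameDeriv, coord_leibniz, add_smul, mul_smul, Finset.sum_add_distrib,
    ← Finset.smul_sum, b.sum_repr]

theorem frameDeriv_algebraMap_smul_right [Module R M] [IsScalarTower R A M]
    (D : Derivation R A A) (c : R) (Y : M) :
    b.frameDeriv D (c • Y) = c • b.frameDeriv D Y := by
  rw [← algebraMap_smul A c Y, frameDeriv_smul_right, Derivation.map_algebraMap, zero_smul,
    zero_add, algebraMap_smul]

end Module.Basis

/-- Definition 2.39 together with Propositions 2.42/Theorem 2.33 (sign-free form):
the Weitzenböck operator `∇_X Y := ∑ α, (ρ(X) Y^α) • Z_α` associated to a finite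
basis (parallelisation) `(Z_α)` and an `A`-linear `ρ` is a quasi-connection. -/
theorem weitzenboeck_isQuasiConnection {A : Type*} [CommRing A] [Algebra ℝ A]
    {ι : Type*} [Fintype ι]
    (b : Module.Basis ι A (Derivation ℝ A A))
    (rho : Derivation ℝ A A →ₗ[A] Derivation ℝ A A) :
    IsQuasiConnection (fun X Y => ∑ α, rho X (b.repr Y α) • b α) rho := by
  change IsQuasiConnection (fun X Y => b.frameDeriv (rho X) Y) rho
  refine ⟨fun X X' Y => ?_, fun c X Y => ?_, fun X => b.frameDeriv_add_right (rho X),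
    fun c X Y => b.frameDeriv_algebraMap_smul_right (rho X) c Y, fun f X Y => ?_,
    fun f X => b.frameDeriv_smul_right (rho X) f⟩
  · dsimp only
    rw [map_add, b.frameDeriv_add_left]
  · dsimp only
    rw [← algebraMap_smul A c X, map_smul, b.frameDeriv_smul_left, algebraMap_smul]
  · dsimp only
    rw [map_smul, b.frameDeriv_smul_left]
end

section
/- Suppose L is a free A-module and let b = (Z_α)_{α∈ι} and b' = (Z'_β)_{β∈ι} be two finite A-bases of L related by a constant change of frame: Z'_β = ∑_α (algebraMap ℝ A)(M β α) • Z_α for some matrix M : ι × ι → ℝ. Let ρ : L →ₗ[A] L be A-linear. Then the Weitzenböck operators defined from the two bases coincide: for all X, Y ∈ L, ∑_α (ρ(X) Y^α) • Z_α = ∑_β (ρ(X) Y'^β) • Z'_β, where Y^α and Y'^β are the coefficients of Y in the bases b and b' respectively. -/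
open scoped BigOperators

/-- The paper's `∇_X` for the frame `b` is `weitzenboeck (ρ X) b`. -/
noncomputable def weitzenboeck {R A L ι : Type*} [CommRing R] [CommRing A] [Algebra R A]
    [AddCommGroup L] [Module A L] [Fintype ι] (D : A →ₗ[R] A) (b : Module.Basis ι A L) : L →+ L where
  toFun Y := ∑ α, D (b.repr Y α) • b α
  map_zero' := by simp
  map_add' Y Y' := by simp [add_smul, Finset.sum_add_distrib]

section Weitzenboeck

variable {R A L ι : Type*} [CommRing R] [CommRing A] [Algebra R A] [AddCommGroup L] [Module A L]
  [Fintype ι] (D : A →ₗ[R] A) (b : Module.Basis ι A L)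

theorem weitzenboeck_sum_smul (f : ι → A) :
    weitzenboeck D b (∑ α, f α • b α) = ∑ α, D (f α) • b α := by
  simp only [weitzenboeck, AddMonoidHom.coe_mk, ZeroHom.coe_mk, b.repr_sum_self]

/-- Fields with constant coefficients in the frame `b` are parallel: `R`-linearity of `D` lets the
constants pass through. -/
theorem weitzenboeck_smul_sum_algebraMap_smul (f : A) (c : ι → R) :
    weitzenboeck D b (f • ∑ α, algebraMap R A (c α) • b α) =
      D f • ∑ α, algebraMap R A (c α) • b α := by
  have hD : ∀ α, D (f * algebraMap R A (c α)) = D f * algebraMap R A (c α) := fun α => by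
    rw [mul_comm, ← Algebra.smul_def, D.map_smul, Algebra.smul_def, mul_comm]
  simp only [Finset.smul_sum, smul_smul, weitzenboeck_sum_smul, hD]

end Weitzenboeck

/-- Proposition 2.40 (sign-free form): the Weitzenböck operator generated by `ρ` is
independent of the chosen parallelisation, for bases related by a constant
change of frame. -/
theorem weitzenboeck_independent_of_parallelisation {A : Type*} [CommRing A] [Algebra ℝ A]
    {ι : Type*} [Fintype ι]
    (b b' : Module.Basis ι A (Derivation ℝ A A))
    (M : ι → ι → ℝ)
    (hM : ∀ β, b' β = ∑ α, algebraMap ℝ A (M β α) • b α)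
    (rho : Derivation ℝ A A →ₗ[A] Derivation ℝ A A) :
    ∀ X Y : Derivation ℝ A A,
      ∑ α, rho X (b.repr Y α) • b α = ∑ β, rho X (b'.repr Y β) • b' β := by
  intro X Y
  calc ∑ α, rho X (b.repr Y α) • b α
      = weitzenboeck (rho X).toLinearMap b (∑ β, b'.repr Y β • b' β) := by rw [b'.sum_repr]; rfl
    _ = ∑ β, rho X (b'.repr Y β) • b' β := by
      rw [map_sum]
      refine Finset.sum_congr rfl fun β _ => ?_
      rw [hM β, weitzenboeck_smul_sum_algebraMap_smul]
      rfl
end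

section
/- Suppose L is a free A-module with a finite basis (Z_α)_{α∈ι}, let ρ : L →ₗ[A] L be A-linear with ρ ∘ ρ = id, and let ∇ be the Weitzenböck operator ∇_X Y := ∑_α (ρ(X) Y^α) • Z_α, where Y = ∑_α Y^α • Z_α. Then ∇ is flat: for all X, Y, Z ∈ L, ∇_X(∇_Y Z) − ∇_Y(∇_X Z) − ∇_{ρ(⁅ρ(X), ρ(Y)⁆)} Z = 0. -/
open scoped BigOperators

/-! In the frame `b`, the Weitzenböck operator acts on coefficients: `∇_X` applies the derivation
`ρ X` to every coordinate. Hence `R(X,Y)` applies `ρX ρY − ρY ρX − ρ(ρ⁅ρX, ρY⁆)` to every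
coordinate, and since `ρ` is an involution this is `⁅ρX, ρY⁆ − ⁅ρX, ρY⁆ = 0`. -/

namespace Module.Basis

variable {R M ι : Type*} [Ring R] [AddCommGroup M] [Module R M] [Fintype ι]

noncomputable def mapCoords (b : Basis ι R M) (D : R → R) (Y : M) : M :=
  ∑ α, D (b.repr Y α) • b α

variable (b : Basis ι R M)

theorem mapCoords_mapCoords (D E : R → R) (Y : M) :
    b.mapCoords D (b.mapCoords E Y) = b.mapCoords (D ∘ E) Y := by
  simp only [mapCoords, b.repr_sum_self, Function.comp_apply]

theorem mapCoords_sub (D E : R → R) (Y : M) :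
    b.mapCoords (D - E) Y = b.mapCoords D Y - b.mapCoords E Y := by
  simp only [mapCoords, Pi.sub_apply, sub_smul, Finset.sum_sub_distrib]

theorem mapCoords_zero (Y : M) : b.mapCoords 0 Y = 0 := by
  simp only [mapCoords, Pi.zero_apply, zero_smul, Finset.sum_const_zero]

end Module.Basis

open Module.Basis in
/-- Propositions 2.41 and 2.37 (sign-free form): the Weitzenböck operator associated
to a parallelisation and an involutive anchor is flat. -/
theorem weitzenboeck_flat {A : Type*} [CommRing A] [Algebra ℝ A]
    {ι : Type*} [Fintype ι]
    (b : Module.Basis ι A (Derivation ℝ A A))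
    (rho : Derivation ℝ A A →ₗ[A] Derivation ℝ A A)
    (hinv : rho ∘ₗ rho = LinearMap.id) :
    ∀ X Y Z : Derivation ℝ A A,
      qcCurvature (fun X Y => ∑ α, rho X (b.repr Y α) • b α) rho X Y Z = 0 := by
  intro X Y Z
  have hrho : rho (rho ⁅rho X, rho Y⁆) = ⁅rho X, rho Y⁆ := LinearMap.congr_fun hinv _
  have hcoeff : ⇑(rho X) ∘ ⇑(rho Y) - ⇑(rho Y) ∘ ⇑(rho X) - ⇑(rho (rho ⁅rho X, rho Y⁆)) = 0 := by
    funext f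
    simp [hrho, Derivation.commutator_apply]
  change b.mapCoords (rho X) (b.mapCoords (rho Y) Z) - b.mapCoords (rho Y) (b.mapCoords (rho X) Z)
    - b.mapCoords (rho (rho ⁅rho X, rho Y⁆)) Z = 0
  rw [mapCoords_mapCoords, mapCoords_mapCoords, ← mapCoords_sub, ← mapCoords_sub, hcoeff,
    mapCoords_zero]
end

section
/- Suppose L is a free A-module with a finite basis (Z_α)_{α∈ι}, let ρ : L →ₗ[A] L be A-linear, and let ∇ be the Weitzenböck operator ∇_X Y := ∑_α (ρ(X) Y^α) • Z_α, where Y = ∑_α Y^α • Z_α. Let g : L →ₗ[A] L →ₗ[A] A be an A-bilinear form whose values on the basis are constants: g(Z_α, Z_β) = (algebraMap ℝ A)(c α β) for some c : ι → ι → ℝ. Then ∇ is compatible with g: for all X, Y₁, Y₂ ∈ L, ρ(X)(g(Y₁, Y₂)) = g(∇_X Y₁, Y₂) + g(Y₁, ∇_X Y₂). -/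
open scoped BigOperators

/-! In the coordinates of the parallelisation, `∇_X` differentiates the coefficients by the
derivation `ρ(X)`, and `g` is the bilinear expression `∑ Y₁^α Y₂^β g_αβ` in the coefficients with
`ρ(X)`-constant `g_αβ`; compatibility is then the Leibniz rule applied to each term. -/

namespace Module.Basis

variable {R A M N ι κ : Type*} [CommRing R] [CommRing A] [Algebra R A]
  [AddCommGroup M] [Module A M] [AddCommGroup N] [Module A N] [Fintype ι] [Fintype κ]

noncomputable def weitzenboeck (b : Basis ι A M) (D : Derivation R A A) (Y : M) : M :=
  ∑ α, D (b.repr Y α) • b α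

@[simp]
lemma repr_weitzenboeck (b : Basis ι A M) (D : Derivation R A A) (Y : M) (α : ι) :
    b.repr (b.weitzenboeck D Y) α = D (b.repr Y α) := by
  rw [weitzenboeck, b.repr_sum_self]

lemma bilin_eq_sum_repr_mul_repr_mul (b₁ : Basis ι A M) (b₂ : Basis κ A N)
    (g : M →ₗ[A] N →ₗ[A] A) (x : M) (y : N) :
    g x y = ∑ α, ∑ β, b₁.repr x α * b₂.repr y β * g (b₁ α) (b₂ β) := by
  conv_lhs => rw [← b₁.sum_repr x, ← b₂.sum_repr y]
  simp only [map_sum, map_smul, LinearMap.sum_apply, LinearMap.smul_apply, smul_eq_mul,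
    Finset.mul_sum, mul_assoc]
  rw [Finset.sum_comm]
  exact Finset.sum_congr rfl fun _ _ => Finset.sum_congr rfl fun _ _ => mul_left_comm _ _ _

theorem weitzenboeck_compatible (b₁ : Basis ι A M) (b₂ : Basis κ A N) (D : Derivation R A A)
    (g : M →ₗ[A] N →ₗ[A] A) (hg : ∀ α β, D (g (b₁ α) (b₂ β)) = 0) (x : M) (y : N) :
    D (g x y) = g (b₁.weitzenboeck D x) y + g x (b₂.weitzenboeck D y) := by
  rw [bilin_eq_sum_repr_mul_repr_mul b₁ b₂ g x y,
    bilin_eq_sum_repr_mul_repr_mul b₁ b₂ g (b₁.weitzenboeck D x) y,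
    bilin_eq_sum_repr_mul_repr_mul b₁ b₂ g x (b₂.weitzenboeck D y)]
  simp only [repr_weitzenboeck, map_sum, ← Finset.sum_add_distrib]
  refine Finset.sum_congr rfl fun α _ => Finset.sum_congr rfl fun β _ => ?_
  rw [Derivation.leibniz, Derivation.leibniz, hg]
  simp only [smul_eq_mul]
  ring

end Module.Basis

/-- Proposition 2.43 (sign-free form): the Weitzenböck operator is compatible with
any `A`-bilinear form whose values on the parallelisation are constants (in
particular with the induced odd Riemannian metric of Definition 2.42). -/
theorem weitzenboeck_compatible_with_constant_metric {A : Type*} [CommRing A] [Algebra ℝ A]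
    {ι : Type*} [Fintype ι]
    (b : Module.Basis ι A (Derivation ℝ A A))
    (rho : Derivation ℝ A A →ₗ[A] Derivation ℝ A A)
    (g : Derivation ℝ A A →ₗ[A] Derivation ℝ A A →ₗ[A] A)
    (c : ι → ι → ℝ)
    (hg : ∀ α β, g (b α) (b β) = algebraMap ℝ A (c α β)) :
    ∀ X Y₁ Y₂ : Derivation ℝ A A,
      rho X (g Y₁ Y₂) =
        g (∑ α, rho X (b.repr Y₁ α) • b α) Y₂ +
        g Y₁ (∑ α, rho X (b.repr Y₂ α) • b α) := by
  intro X
  exact b.weitzenboeck_compatible b (rho X) g fun α β => by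
    rw [hg, Derivation.map_algebraMap]
end
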